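/- Let M be a symmetric irreducible r×r 0–1 transition matrix and let A : Σ̂_M → ℝ be Lipschitz continuous. Suppose β_n → ∞, φ_{β_n}/β_n → V uniformly, and for a fixed y ∈ Σ*_M the effective probabilities μ_{y,β_n} converge weak* to μ_y^∞ ∈ M_σ. Then lim_{n→∞} λ_{β_n}/β_n = max_{μ ∈ M_σ} ∫_{Σ_M} ( A(y,x) + V(x) − V(y) ) dμ(x) = ∫_{Σ_M} ( A(y,x) + V(x) − V(y) ) dμ_y^∞(x). In particular this common value does not depend on the point y. -/

import Mathlib

/-! Divide the fixed-point equation `G⁺_{βA}(φ_β) = φ_β + λ_β` by `β = β_n`. The entropy term is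
bounded (by `r`) and so disappears, and `φ_β / β → V` uniformly; hence for every invariant `μ`
the normalized free energy `(∫ (βA(y,·) + φ_β) dμ + h_μ) / β` tends to `∫ (A(y,·) + V) dμ`.
It is bounded by `(φ_β(y) + λ_β) / β`, with equality at the effective probability `μ_{y,β}`,
so passing to the weak* limit `ν` of these maximizers shows both that `λ_β / β` converges to
`∫ (A(y,·) + V) dν - V(y)` and that `ν` attains the maximum over all invariant measures. -/

open MeasureTheory Filter Topology Real

/-- The one-sided subshift of finite type defined by the 0-1 transition matrix `M`:
sequences `x : ℕ → Fin r` with `M (x j) (x (j+1)) = 1` for all `j`. -/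
abbrev Shift (r : ℕ) (M : Fin r → Fin r → Bool) : Type :=
  {x : ℕ → Fin r // ∀ j : ℕ, M (x j) (x (j + 1)) = true}

variable {r : ℕ} {M : Fin r → Fin r → Bool}

/-- The matrix `M` is irreducible: any symbol can be joined to any other by an
admissible path of positive length. -/
def Irred (M : Fin r → Fin r → Bool) : Prop :=
  ∀ i j : Fin r, ∃ n : ℕ, ∃ w : Fin (n + 2) → Fin r,
    w 0 = i ∧ w (Fin.last (n + 1)) = j ∧
    ∀ k : Fin (n + 1), M (w k.castSucc) (w k.succ) = true

/-- The left shift map on the subshift. -/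
def shiftMap (x : Shift r M) : Shift r M :=
  ⟨fun j => x.1 (j + 1), fun j => x.2 (j + 1)⟩

/-- The metric `d(x,y) = Λ^k`, `k = min { j : x_j ≠ y_j }`, `d(x,x) = 0`. -/
noncomputable def shiftDist (Λ : ℝ) (x y : Shift r M) : ℝ :=
  letI := Classical.decEq (Shift r M)
  if h : x = y then 0
  else Λ ^ Nat.find (show ∃ j : ℕ, x.1 j ≠ y.1 j by
    by_contra hc
    push_neg at hc
    exact h (Subtype.ext (funext hc)))

/-- `φ` is Lipschitz with constant `K` for the metric `shiftDist Λ`. -/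
def LipBnd (Λ K : ℝ) (φ : Shift r M → ℝ) : Prop :=
  ∀ x y : Shift r M, |φ x - φ y| ≤ K * shiftDist Λ x y

/-- `φ` is Lipschitz continuous for the metric `shiftDist Λ`. -/
def IsLip (Λ : ℝ) (φ : Shift r M → ℝ) : Prop :=
  ∃ K : ℝ, LipBnd Λ K φ

/-- The best Lipschitz constant of `φ`. -/
noncomputable def lipC (Λ : ℝ) (φ : Shift r M → ℝ) : ℝ :=
  sInf {K : ℝ | 0 ≤ K ∧ LipBnd Λ K φ}

/-- The uniform norm `‖φ‖₀`. -/
noncomputable def unorm (φ : Shift r M → ℝ) : ℝ :=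
  ⨆ x : Shift r M, |φ x|

/-- An observable on the natural extension `Σ̂_M ⊂ Σ*_M × Σ_M` (with `Σ*_M`
canonically identified with `Σ_M`), as a function of `(y, x)`; it is Lipschitz with
constant `K` for the max-metric. -/
def LipBnd2 (Λ K : ℝ) (A : Shift r M → Shift r M → ℝ) : Prop :=
  ∀ y x y' x' : Shift r M,
    |A y x - A y' x'| ≤ K * max (shiftDist Λ y y') (shiftDist Λ x x')

/-- `A` is Lipschitz continuous on `Σ̂_M`. -/
def IsLip2 (Λ : ℝ) (A : Shift r M → Shift r M → ℝ) : Prop :=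
  ∃ K : ℝ, LipBnd2 Λ K A

/-- The best Lipschitz constant of the observable `A`. -/
noncomputable def lipC2 (Λ : ℝ) (A : Shift r M → Shift r M → ℝ) : ℝ :=
  sInf {K : ℝ | 0 ≤ K ∧ LipBnd2 Λ K A}

/-- The uniform norm `‖A‖₀` of the observable. -/
noncomputable def unorm2 (A : Shift r M → Shift r M → ℝ) : ℝ :=
  ⨆ p : Shift r M × Shift r M, |A p.1 p.2|

/-- `μ` is a `σ`-invariant Borel probability measure on the subshift. -/
def InvProb (μ : Measure (Shift r M)) : Prop :=
  IsProbabilityMeasure μ ∧ μ.map shiftMap = μ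

/-- Entropy of the cylinder partition of length `n`:
`H_n(μ) = - ∑_{|w| = n} μ([w]) log μ([w])`. -/
noncomputable def cylEnt (μ : Measure (Shift r M)) (n : ℕ) : ℝ :=
  ∑ w : Fin n → Fin r,
    Real.negMulLog ((μ {x : Shift r M | ∀ i : Fin n, x.1 i.1 = w i}).toReal)

/-- The Kolmogorov–Sinai entropy `h_μ(σ)` of an invariant measure on the subshift:
since the cylinder partition is generating and `n ↦ H_n(μ)` is subadditive,
`h_μ(σ) = lim_n H_n(μ)/n = inf_n H_n(μ)/n`. -/
noncomputable def entropy (μ : Measure (Shift r M)) : ℝ :=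
  ⨅ n : ℕ, cylEnt μ (n + 1) / (n + 1)

/-- The operator
`G⁺_A(φ)(y) = sup_{μ ∈ M_σ} [ ∫ (A(y,x) + φ(x)) dμ(x) + h_μ(σ) ]`. -/
noncomputable def Gplus (A : Shift r M → Shift r M → ℝ)
    (φ : Shift r M → ℝ) (y : Shift r M) : ℝ :=
  sSup {t : ℝ | ∃ μ : Measure (Shift r M), InvProb μ ∧
    t = ∫ x, (A y x + φ x) ∂μ + entropy μ}

/-- The maximal ergodic average `max_{μ ∈ M_σ} ∫ B dμ`. -/
noncomputable def maxErg (B : Shift r M → ℝ) : ℝ :=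
  sSup {t : ℝ | ∃ μ : Measure (Shift r M), InvProb μ ∧ t = ∫ x, B x ∂μ}

/-- The quotient norm on functions modulo additive constants:
`‖g‖_c = inf_{γ ∈ ℝ} ‖g + γ‖₀`. -/
noncomputable def cnorm (g : Shift r M → ℝ) : ℝ :=
  ⨅ γ : ℝ, unorm (fun x => g x + γ)

theorem shiftDist_nonneg {Λ : ℝ} (hΛ : 0 ≤ Λ) (x y : Shift r M) : 0 ≤ shiftDist Λ x y := by
  unfold shiftDist
  split_ifs
  · exact le_rfl
  · positivity

theorem shiftDist_le_pow {Λ : ℝ} (hΛ₀ : 0 ≤ Λ) (hΛ₁ : Λ ≤ 1) {x y : Shift r M} {k : ℕ}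
    (h : ∀ j < k, x.1 j = y.1 j) : shiftDist Λ x y ≤ Λ ^ k := by
  unfold shiftDist
  split_ifs
  · positivity
  · refine pow_le_pow_of_le_one hΛ₀ hΛ₁ (Nat.le_find_iff _ _ |>.2 fun j hj => ?_)
    exact not_not.2 (h j hj)

theorem eventually_nhds_forall_lt_eq (x : Shift r M) (k : ℕ) :
    ∀ᶠ z in 𝓝 x, ∀ j < k, z.1 j = x.1 j :=
  (eventually_all_finite (Set.finite_lt_nat k)).2 fun j _ =>
    tendsto_pure.1 <| nhds_discrete (Fin r) ▸
      ((continuous_apply j).comp continuous_subtype_val).tendsto x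

theorem LipBnd.continuous {Λ K : ℝ} (hΛ : Λ ∈ Set.Ioo (0 : ℝ) 1) {f : Shift r M → ℝ}
    (hf : LipBnd Λ K f) : Continuous f := by
  refine continuous_iff_continuousAt.2 fun x => Metric.tendsto_nhds.2 fun ε hε => ?_
  have hsmall : Tendsto (fun k : ℕ => |K| * Λ ^ k) atTop (𝓝 0) := by
    simpa using (tendsto_pow_atTop_nhds_zero_of_lt_one hΛ.1.le hΛ.2).const_mul |K|
  obtain ⟨k, hk⟩ := (hsmall.eventually (gt_mem_nhds hε)).exists
  filter_upwards [eventually_nhds_forall_lt_eq x k] with z hz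
  calc dist (f z) (f x) = |f z - f x| := Real.dist_eq _ _
    _ ≤ K * shiftDist Λ z x := hf z x
    _ ≤ |K| * Λ ^ k := mul_le_mul (le_abs_self K) (shiftDist_le_pow hΛ.1.le hΛ.2.le hz)
        (shiftDist_nonneg hΛ.1.le _ _) (abs_nonneg K)
    _ < ε := hk

theorem IsLip.continuous {Λ : ℝ} (hΛ : Λ ∈ Set.Ioo (0 : ℝ) 1) {f : Shift r M → ℝ}
    (hf : IsLip Λ f) : Continuous f :=
  hf.elim fun _ hK => hK.continuous hΛ

theorem LipBnd2.lipBnd_right {Λ K : ℝ} (hΛ : 0 ≤ Λ) {A : Shift r M → Shift r M → ℝ}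
    (hA : LipBnd2 Λ K A) (y : Shift r M) : LipBnd Λ K (A y) := fun x x' => by
  have h := hA y x y x'
  rwa [show shiftDist Λ y y = 0 by simp [shiftDist], max_eq_right (shiftDist_nonneg hΛ x x')] at h

instance : CompactSpace (Shift r M) := by
  refine isCompact_iff_compactSpace (s := {x : ℕ → Fin r | ∀ j, M (x j) (x (j + 1)) = true}).1
    (IsClosed.isCompact ?_)
  rw [Set.ofPred_forall]
  exact isClosed_iInter fun j => isClosed_eq
    ((continuous_of_discreteTopology (f := Function.uncurry M)).comp₂ (continuous_apply j)
      (continuous_apply (j + 1))) continuous_const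

theorem Continuous.integrable_of_compactSpace {X E : Type*} [TopologicalSpace X] [CompactSpace X]
    [MeasurableSpace X] [OpensMeasurableSpace X] [NormedAddCommGroup E] {μ : Measure X}
    [IsFiniteMeasure μ] {f : X → E} (hf : Continuous f) : Integrable f μ :=
  hf.integrable_of_hasCompactSupport (HasCompactSupport.of_compactSpace f)

theorem tendsto_integral_sub_of_tendstoUniformly {X ι : Type*} [MeasurableSpace X] {l : Filter ι}
    {F : ι → X → ℝ} {V : X → ℝ} {μ : ι → Measure X} [∀ i, IsProbabilityMeasure (μ i)]
    (h : TendstoUniformly F V l) : Tendsto (fun i => ∫ x, (F i x - V x) ∂μ i) l (𝓝 0) := by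
  refine Metric.tendsto_nhds.2 fun ε hε => ?_
  filter_upwards [Metric.tendstoUniformly_iff.1 h (ε / 2) (half_pos hε)] with i hi
  have hbound := norm_integral_le_of_norm_le_const (μ := μ i) (f := fun x => F i x - V x)
    (C := ε / 2) (Eventually.of_forall fun x => by rw [← dist_eq_norm, dist_comm]; exact (hi x).le)
  rw [probReal_univ, mul_one] at hbound
  rw [dist_zero_right]
  linarith

theorem integral_sub_const {X : Type*} [MeasurableSpace X] {μ : Measure X} [IsProbabilityMeasure μ]
    {f : X → ℝ} (hf : Integrable f μ) (c : ℝ) : ∫ x, (f x - c) ∂μ = ∫ x, f x ∂μ - c := by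
  rw [integral_sub hf (integrable_const c), integral_const, probReal_univ, one_smul]

section Entropy

variable (μ : Measure (Shift r M)) [IsProbabilityMeasure μ]

theorem cylEnt_nonneg (n : ℕ) : 0 ≤ cylEnt μ n :=
  Finset.sum_nonneg fun _ _ => negMulLog_nonneg ENNReal.toReal_nonneg measureReal_le_one

theorem entropy_nonneg : 0 ≤ entropy μ :=
  le_ciInf fun _ => div_nonneg (cylEnt_nonneg μ _) (by positivity)

theorem entropy_le_card : entropy μ ≤ r := by
  have hbdd : BddBelow (Set.range fun n : ℕ => cylEnt μ (n + 1) / (n + 1)) :=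
    ⟨0, by rintro _ ⟨n, rfl⟩; exact div_nonneg (cylEnt_nonneg μ _) (by positivity)⟩
  calc entropy μ ≤ cylEnt μ (0 + 1) / ((0 : ℕ) + 1) := ciInf_le hbdd 0
    _ ≤ ∑ _w : Fin 1 → Fin r, (1 : ℝ) := by
        simp only [CharP.cast_eq_zero, zero_add, div_one]
        exact Finset.sum_le_sum fun _ _ =>
          (negMulLog_le_one_sub_self ENNReal.toReal_nonneg).trans (by simp)
    _ = r := by simp

end Entropy

theorem tendsto_entropy_div_atTop {ι : Type*} {l : Filter ι} {μ : ι → Measure (Shift r M)}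
    [∀ i, IsProbabilityMeasure (μ i)] {b : ι → ℝ} (hb : Tendsto b l atTop) :
    Tendsto (fun i => entropy (μ i) / b i) l (𝓝 0) := by
  simp only [div_eq_mul_inv, mul_comm (entropy _)]
  refine (tendsto_inv_atTop_zero.comp hb).zero_mul_isBoundedUnder_le (isBoundedUnder_of ⟨r, ?_⟩)
  intro i
  simpa [abs_of_nonneg (entropy_nonneg (μ i))] using entropy_le_card (μ i)

theorem integral_add_entropy_le_Gplus {A : Shift r M → Shift r M → ℝ} {φ : Shift r M → ℝ}
    {y : Shift r M} (hA : Continuous (A y)) (hφ : Continuous φ) {μ : Measure (Shift r M)}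
    (hμ : InvProb μ) : ∫ x, (A y x + φ x) ∂μ + entropy μ ≤ Gplus A φ y := by
  refine le_csSup ?_ ⟨μ, hμ, rfl⟩
  obtain ⟨C, hC⟩ := (isCompact_range (hA.add hφ)).bddAbove
  refine ⟨C + r, ?_⟩
  rintro _ ⟨ν, hν, rfl⟩
  have := hν.1
  have hint : ∫ x, (A y x + φ x) ∂ν ≤ C := by
    calc ∫ x, (A y x + φ x) ∂ν ≤ ∫ _, C ∂ν :=
          integral_mono (hA.add hφ).integrable_of_compactSpace (integrable_const C)
            fun x => hC ⟨x, rfl⟩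
      _ = C := by simp
  linarith [entropy_le_card ν]

theorem tendsto_integral_add_entropy_div {a V : Shift r M → ℝ} {ψ : ℕ → Shift r M → ℝ}
    {b : ℕ → ℝ} {μ : ℕ → Measure (Shift r M)} [∀ n, IsProbabilityMeasure (μ n)] {L : ℝ}
    (ha : Continuous a) (hψ : ∀ n, Continuous (ψ n)) (hV : Continuous V)
    (hb : Tendsto b atTop atTop) (hψV : TendstoUniformly (fun n x => ψ n x / b n) V atTop)
    (hL : Tendsto (fun n => ∫ x, (a x + V x) ∂μ n) atTop (𝓝 L)) :
    Tendsto (fun n => (∫ x, (b n * a x + ψ n x) ∂μ n + entropy (μ n)) / b n) atTop (𝓝 L) := by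
  have hsplit : ∀ᶠ n in atTop,
      ∫ x, (a x + V x) ∂μ n + ∫ x, (ψ n x / b n - V x) ∂μ n + entropy (μ n) / b n
        = (∫ x, (b n * a x + ψ n x) ∂μ n + entropy (μ n)) / b n := by
    filter_upwards [hb.eventually_ne_atTop 0] with n hn
    have hint₁ : Integrable (fun x => a x + V x) (μ n) := (ha.add hV).integrable_of_compactSpace
    have hint₂ : Integrable (fun x => ψ n x / b n - V x) (μ n) :=
      (((hψ n).div_const _).sub hV).integrable_of_compactSpace
    rw [← integral_add hint₁ hint₂, add_div, ← integral_div]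
    congr 2 with x
    field_simp
    ring
  simpa using ((hL.add (tendsto_integral_sub_of_tendstoUniformly hψV)).add
    (tendsto_entropy_div_atTop hb)).congr' hsplit

theorem effective_constant_limit_formula_general
    (r : ℕ) (M : Fin r → Fin r → Bool)
    (Λ : ℝ) (hΛ : Λ ∈ Set.Ioo (0 : ℝ) 1)
    (A : Shift r M → Shift r M → ℝ) (hA : IsLip2 Λ A)
    (φ : ℝ → Shift r M → ℝ) (lam : ℝ → ℝ)
    (heff : ∀ β > (0 : ℝ), IsLip Λ (φ β) ∧
      ∀ y, Gplus (fun y x => β * A y x) (φ β) y = φ β y + lam β)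
    (b : ℕ → ℝ) (hb : ∀ n, 0 < b n) (hbtop : Filter.Tendsto b Filter.atTop Filter.atTop)
    (V : Shift r M → ℝ)
    (hV : TendstoUniformly (fun n x => φ (b n) x / b n) V Filter.atTop)
    (y : Shift r M)
    (μseq : ℕ → Measure (Shift r M))
    (hμ : ∀ n, InvProb (μseq n) ∧
      ∫ x, (b n * A y x + φ (b n) x) ∂(μseq n) + entropy (μseq n)
        = Gplus (fun y x => b n * A y x) (φ (b n)) y)
    (ν : Measure (Shift r M)) (hν : InvProb ν)
    (hconv : ∀ f : Shift r M → ℝ, Continuous f →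
      Filter.Tendsto (fun n => ∫ x, f x ∂(μseq n)) Filter.atTop (𝓝 (∫ x, f x ∂ν))) :
    Filter.Tendsto (fun n => lam (b n) / b n) Filter.atTop
      (𝓝 (∫ x, (A y x + V x - V y) ∂ν)) ∧
    ∫ x, (A y x + V x - V y) ∂ν =
      sSup {t : ℝ | ∃ μ : Measure (Shift r M), InvProb μ ∧
        t = ∫ x, (A y x + V x - V y) ∂μ} := by
  obtain ⟨K, hK⟩ := hA
  have hAy : Continuous (A y) := (hK.lipBnd_right hΛ.1.le y).continuous hΛ
  have hφ : ∀ n, Continuous (φ (b n)) := fun n => (heff _ (hb n)).1.continuous hΛ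
  have hVc : Continuous V :=
    hV.continuous (Eventually.of_forall fun n => (hφ n).div_const _).frequently
  have : ∀ n, IsProbabilityMeasure (μseq n) := fun n => (hμ n).1.1
  have hG : Tendsto (fun n => Gplus (fun y x => b n * A y x) (φ (b n)) y / b n) atTop
      (𝓝 (∫ x, (A y x + V x) ∂ν)) :=
    (tendsto_integral_add_entropy_div hAy hφ hVc hbtop hV (hconv _ (hAy.add hVc))).congr
      fun n => by rw [(hμ n).2]
  have hmax : ∀ μ, InvProb μ → ∫ x, (A y x + V x) ∂μ ≤ ∫ x, (A y x + V x) ∂ν := by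
    intro μ hμ'
    have := hμ'.1
    have hle : ∀ n, (∫ x, (b n * A y x + φ (b n) x) ∂μ + entropy μ) / b n
        ≤ Gplus (fun y x => b n * A y x) (φ (b n)) y / b n := fun n =>
      div_le_div_of_nonneg_right
        (integral_add_entropy_le_Gplus (A := fun y x => b n * A y x) (y := y)
          (continuous_const.mul hAy) (hφ n) hμ') (hb n).le
    exact le_of_tendsto_of_tendsto' (tendsto_integral_add_entropy_div (μ := fun _ => μ)
      hAy hφ hVc hbtop hV tendsto_const_nhds) hG hle
  have hsub : ∀ μ : Measure (Shift r M), IsProbabilityMeasure μ →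
      ∫ x, (A y x + V x - V y) ∂μ = ∫ x, (A y x + V x) ∂μ - V y := fun _ _ =>
    integral_sub_const (hAy.add hVc).integrable_of_compactSpace (V y)
  rw [hsub ν hν.1]
  refine ⟨(hG.sub (hV.tendsto_at y)).congr fun n => ?_,
    Eq.symm (IsGreatest.csSup_eq ⟨⟨ν, hν, (hsub ν hν.1).symm⟩, ?_⟩)⟩
  · rw [(heff _ (hb n)).2 y]
    ring
  · rintro _ ⟨μ, hμ', rfl⟩
    rw [hsub μ hμ'.1]
    linarith [hmax μ hμ']

/-- Suppose `β_n → ∞`, `φ_{β_n}/β_n → V` uniformly, and for a fixed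
`y` the effective probabilities `μ_{y,β_n}` converge weak* to `ν ∈ M_σ`. Then
`λ_{β_n}/β_n → max_{μ ∈ M_σ} ∫ (A(y,x) + V(x) − V(y)) dμ(x)
            = ∫ (A(y,x) + V(x) − V(y)) dν(x)`
(in particular this common value does not depend on `y`). -/
theorem effective_constant_limit_formula
    (r : ℕ) (hr : 2 ≤ r) (M : Fin r → Fin r → Bool)
    (hSym : ∀ i j, M i j = M j i) (hIrr : Irred M)
    (Λ : ℝ) (hΛ : Λ ∈ Set.Ioo (0 : ℝ) 1)
    (A : Shift r M → Shift r M → ℝ) (hA : IsLip2 Λ A)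
    (φ : ℝ → Shift r M → ℝ) (lam : ℝ → ℝ)
    (heff : ∀ β > (0 : ℝ), IsLip Λ (φ β) ∧
      ∀ y, Gplus (fun y x => β * A y x) (φ β) y = φ β y + lam β)
    (b : ℕ → ℝ) (hb : ∀ n, 0 < b n) (hbtop : Filter.Tendsto b Filter.atTop Filter.atTop)
    (V : Shift r M → ℝ)
    (hV : TendstoUniformly (fun n x => φ (b n) x / b n) V Filter.atTop)
    (y : Shift r M)
    (μseq : ℕ → Measure (Shift r M))
    (hμ : ∀ n, InvProb (μseq n) ∧
      ∫ x, (b n * A y x + φ (b n) x) ∂(μseq n) + entropy (μseq n)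
        = Gplus (fun y x => b n * A y x) (φ (b n)) y)
    (ν : Measure (Shift r M)) (hν : InvProb ν)
    (hconv : ∀ f : Shift r M → ℝ, Continuous f →
      Filter.Tendsto (fun n => ∫ x, f x ∂(μseq n)) Filter.atTop (𝓝 (∫ x, f x ∂ν))) :
    Filter.Tendsto (fun n => lam (b n) / b n) Filter.atTop
      (𝓝 (∫ x, (A y x + V x - V y) ∂ν)) ∧
    ∫ x, (A y x + V x - V y) ∂ν =
      sSup {t : ℝ | ∃ μ : Measure (Shift r M), InvProb μ ∧
        t = ∫ x, (A y x + V x - V y) ∂μ} :=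
  effective_constant_limit_formula_general r M Λ hΛ A hA φ lam heff b hb hbtop V hV y μseq hμ ν hν
    hconv
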